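/- arXiv:2504.09735 — 2 statements merged into one kernel-verified Lean document; each statement's English description precedes it below -/
import Mathlib

section
/- Let x, t, v ∈ ℂ be nonzero and λ, ε ∈ ℝ. Define f^ϑ_{x,t,v,λ,ε}(z) := (tq^{1−2iλ}x^{±1}, tvq^{1+iλ}/z;q²)_∞ · θ(vq^{−2ε−iλ}/(tz);q²) / (vq^{−iλ}x^{±1}/z, tzq^{1−iλ}/v;q²)_∞. Then for every z ∈ ℂ∖{0} such that the denominators are nonzero at z and at z/q², one has (π_{λ,ε}(Ỹ_{t,v}) f^ϑ_{x,t,v,λ,ε})(z) = (μ_x − μ_t)·f^ϑ_{x,t,v,λ,ε}(z). -/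
noncomputable section

open Complex

/-- `q^{iλ} := exp(iλ · log q)`. -/
def qil (q lam : ℝ) : ℂ := Complex.exp (Complex.I * lam * Real.log q)

/-- the real power `q^a` viewed as a complex number. -/
def qr (q a : ℝ) : ℂ := ((q ^ a : ℝ) : ℂ)

/-- the infinite `q`-shifted factorial `(w;p)_∞ = ∏_{j≥0} (1 - w p^j)`. -/
def qPoch (w p : ℂ) : ℂ := ∏' j : ℕ, (1 - w * p ^ j)

/-- the theta function `θ(w;p) = (w;p)_∞ (p/w;p)_∞`. -/
def qTheta (w p : ℂ) : ℂ := qPoch w p * qPoch (p / w) p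

/-- `μ_s = (s + s⁻¹)/(q⁻¹ - q)`. -/
def mu (q : ℝ) (s : ℂ) : ℂ := (s + s⁻¹) / ((q : ℂ)⁻¹ - (q : ℂ))

/-- The eigenfunction
`f_{x,s,u,λ,ε}(z) = (sq^{1−2iλ}x^{±1}, uszq^{1+iλ};q²)_∞ θ(q^{2ε−iλ}uz/s;q²) /
(uzq^{−iλ}x^{±1}, sq^{1−iλ}/(uz);q²)_∞`. -/
def fAW (q lam eps : ℝ) (x s u : ℂ) (z : ℂ) : ℂ :=
  (qPoch (s * (q : ℂ) * ((qil q lam)⁻¹) ^ 2 * x) ((q : ℂ) ^ 2) *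
    qPoch (s * (q : ℂ) * ((qil q lam)⁻¹) ^ 2 / x) ((q : ℂ) ^ 2) *
    qPoch (u * s * z * (q : ℂ) * qil q lam) ((q : ℂ) ^ 2) *
    qTheta (qr q (2 * eps) * (qil q lam)⁻¹ * u * z / s) ((q : ℂ) ^ 2)) /
  (qPoch (u * z * (qil q lam)⁻¹ * x) ((q : ℂ) ^ 2) *
    qPoch (u * z * (qil q lam)⁻¹ / x) ((q : ℂ) ^ 2) *
    qPoch (s * (q : ℂ) * (qil q lam)⁻¹ / (u * z)) ((q : ℂ) ^ 2))

/-- the denominator of `f_{x,s,u,λ,ε}` at the point `z`. -/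
def fDen (q lam : ℝ) (x s u : ℂ) (z : ℂ) : ℂ :=
  qPoch (u * z * (qil q lam)⁻¹ * x) ((q : ℂ) ^ 2) *
    qPoch (u * z * (qil q lam)⁻¹ / x) ((q : ℂ) ^ 2) *
    qPoch (s * (q : ℂ) * (qil q lam)⁻¹ / (u * z)) ((q : ℂ) ^ 2)
/-- action of the twisted primitive element `Ỹ_{t,w}` in the representation `π_{λ,ε}`. -/
def piYt (q lam eps : ℝ) (t w : ℂ) (f : ℂ → ℂ) (z : ℂ) : ℂ :=
  qr q (-(2 * eps)) *
      ((t + t⁻¹ - w⁻¹ * z * (q : ℂ)⁻¹ * (qil q lam)⁻¹ - w * z⁻¹ * (q : ℂ) * qil q lam) /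
        ((q : ℂ)⁻¹ - (q : ℂ))) * f (z / (q : ℂ) ^ 2)
    + ((w⁻¹ * z * qil q lam + w * z⁻¹ * (qil q lam)⁻¹ - t - t⁻¹) / ((q : ℂ)⁻¹ - (q : ℂ))) * f z

/-- The eigenfunction
`f^ϑ_{x,t,v,λ,ε}(z) = (tq^{1−2iλ}x^{±1}, tvq^{1+iλ}/z;q²)_∞ θ(vq^{−2ε−iλ}/(tz);q²) /
(vq^{−iλ}x^{±1}/z, tzq^{1−iλ}/v;q²)_∞`. -/
def fT (q lam eps : ℝ) (x t v : ℂ) (z : ℂ) : ℂ :=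
  (qPoch (t * (q : ℂ) * ((qil q lam)⁻¹) ^ 2 * x) ((q : ℂ) ^ 2) *
    qPoch (t * (q : ℂ) * ((qil q lam)⁻¹) ^ 2 / x) ((q : ℂ) ^ 2) *
    qPoch (t * v * (q : ℂ) * qil q lam / z) ((q : ℂ) ^ 2) *
    qTheta (v * qr q (-(2 * eps)) * (qil q lam)⁻¹ / (t * z)) ((q : ℂ) ^ 2)) /
  (qPoch (v * (qil q lam)⁻¹ * x / z) ((q : ℂ) ^ 2) *
    qPoch (v * (qil q lam)⁻¹ / (x * z)) ((q : ℂ) ^ 2) *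
    qPoch (t * z * (q : ℂ) * (qil q lam)⁻¹ / v) ((q : ℂ) ^ 2))

/-- the denominator of `f^ϑ_{x,t,v,λ,ε}` at the point `z`. -/
def fTDen (q lam : ℝ) (x t v : ℂ) (z : ℂ) : ℂ :=
  qPoch (v * (qil q lam)⁻¹ * x / z) ((q : ℂ) ^ 2) *
    qPoch (v * (qil q lam)⁻¹ / (x * z)) ((q : ℂ) ^ 2) *
    qPoch (t * z * (q : ℂ) * (qil q lam)⁻¹ / v) ((q : ℂ) ^ 2)

/-!
The quotient `f(z/q²)/f(z)` is rational in `z`: each factor `(w;q²)_∞` shifts by a linear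
factor `1 - w`, and the theta function is quasi-periodic, `θ(q²w;q²) = -w⁻¹θ(w;q²)`.
The coefficient of `f(z/q²)` in `π_{λ,ε}(Ỹ_{t,v})` factors as
`t⁻¹(1 - tvq^{1+iλ}/z)(1 - tzq^{-1-iλ}/v)`, which cancels exactly against the denominator of
that quotient. The eigenvalue equation thus collapses to the identity
`-u(1 - x/u)(1 - 1/(xu)) + u + u⁻¹ = x + x⁻¹` with `u = zq^{iλ}/v`.
-/

lemma multipliable_one_sub_mul_pow {w p : ℂ} (hp : ‖p‖ < 1) :
    Multipliable fun j : ℕ => 1 - w * p ^ j := by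
  simpa [sub_eq_add_neg] using Complex.multipliable_one_add_of_summable
    ((summable_geometric_of_norm_lt_one hp).mul_left w).neg

lemma qPoch_eq_one_sub_mul {w p : ℂ} (hp : ‖p‖ < 1) :
    qPoch w p = (1 - w) * qPoch (w * p) p := by
  have hm : Multipliable fun j : ℕ => 1 - w * p ^ (j + 1) :=
    (multipliable_one_sub_mul_pow (w := w * p) hp).congr fun j => by ring
  rw [qPoch, qPoch, tprod_eq_zero_mul' (f := fun j => 1 - w * p ^ j) hm, pow_zero, mul_one]
  exact congrArg _ (tprod_congr fun j => by ring)

lemma qTheta_mul_base {w p : ℂ} (hp0 : p ≠ 0) (hp : ‖p‖ < 1) (hw : w ≠ 0) :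
    qTheta (w * p) p = -w⁻¹ * qTheta w p := by
  by_cases hw1 : w = 1
  · subst hw1
    simp [qTheta, qPoch_eq_one_sub_mul (w := 1) hp, hp0]
  have key : (1 - w) * qTheta (w * p) p = (1 - w⁻¹) * qTheta w p := by
    rw [qTheta, qTheta, qPoch_eq_one_sub_mul (w := w) hp,
      qPoch_eq_one_sub_mul (w := p / (w * p)) hp,
      show p / (w * p) = w⁻¹ by field_simp, show w⁻¹ * p = p / w by ring]
    ring
  apply mul_left_cancel₀ (sub_ne_zero.mpr (Ne.symm hw1))
  rw [key]
  field_simp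
  ring

def thetaQuotientDen (p c₁ c₂ d z : ℂ) : ℂ :=
  qPoch (c₁ / z) p * qPoch (c₂ / z) p * qPoch (d * z) p

def thetaQuotient (p C a b c₁ c₂ d z : ℂ) : ℂ :=
  C * qPoch (a / z) p * qTheta (b / z) p / thetaQuotientDen p c₁ c₂ d z

lemma thetaQuotient_div_base {p C a b c₁ c₂ d z : ℂ} (hp0 : p ≠ 0) (hp : ‖p‖ < 1)
    (hb : b ≠ 0) (hz : z ≠ 0) (hD : thetaQuotientDen p c₁ c₂ d z ≠ 0)
    (hD' : thetaQuotientDen p c₁ c₂ d (z / p) ≠ 0) :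
    thetaQuotient p C a b c₁ c₂ d (z / p) * ((1 - a / z) * (1 - d * (z / p))) =
      thetaQuotient p C a b c₁ c₂ d z * ((1 - c₁ / z) * (1 - c₂ / z) * -(z / b)) := by
  have hnum : qPoch (a / (z / p)) p * qTheta (b / (z / p)) p * (1 - a / z) =
      qPoch (a / z) p * qTheta (b / z) p * -(z / b) := by
    rw [show a / (z / p) = a / z * p by rw [div_div_eq_mul_div]; ring,
      show b / (z / p) = b / z * p by rw [div_div_eq_mul_div]; ring,
      qTheta_mul_base hp0 hp (div_ne_zero hb hz), qPoch_eq_one_sub_mul (w := a / z) hp, inv_div]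
    ring
  have hden : thetaQuotientDen p c₁ c₂ d (z / p) * ((1 - c₁ / z) * (1 - c₂ / z)) =
      thetaQuotientDen p c₁ c₂ d z * (1 - d * (z / p)) := by
    rw [thetaQuotientDen, thetaQuotientDen, qPoch_eq_one_sub_mul (w := c₁ / z) hp,
      qPoch_eq_one_sub_mul (w := c₂ / z) hp, qPoch_eq_one_sub_mul (w := d * (z / p)) hp,
      show c₁ / (z / p) = c₁ / z * p by rw [div_div_eq_mul_div]; ring,
      show c₂ / (z / p) = c₂ / z * p by rw [div_div_eq_mul_div]; ring,
      show d * (z / p) * p = d * z by field_simp]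
    ring
  rw [thetaQuotient, thetaQuotient, div_mul_eq_mul_div, div_mul_eq_mul_div,
    div_eq_div_iff hD' hD]
  linear_combination C * (1 - d * (z / p)) * thetaQuotientDen p c₁ c₂ d z * hnum -
    C * qPoch (a / z) p * qTheta (b / z) p * -(z / b) * hden

lemma fTDen_eq_thetaQuotientDen (q lam : ℝ) (x t v : ℂ) :
    fTDen q lam x t v = thetaQuotientDen ((q : ℂ) ^ 2) (v * (qil q lam)⁻¹ * x)
      (v * (qil q lam)⁻¹ / x) (t * (q : ℂ) * (qil q lam)⁻¹ / v) := by
  funext z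
  rw [fTDen, thetaQuotientDen, div_div, show t * (q : ℂ) * (qil q lam)⁻¹ / v * z =
    t * z * (q : ℂ) * (qil q lam)⁻¹ / v by ring]

lemma fT_eq_thetaQuotient (q lam eps : ℝ) (x t v : ℂ) :
    fT q lam eps x t v = thetaQuotient ((q : ℂ) ^ 2)
      (qPoch (t * (q : ℂ) * ((qil q lam)⁻¹) ^ 2 * x) ((q : ℂ) ^ 2) *
        qPoch (t * (q : ℂ) * ((qil q lam)⁻¹) ^ 2 / x) ((q : ℂ) ^ 2))
      (t * v * (q : ℂ) * qil q lam) (v * qr q (-(2 * eps)) * (qil q lam)⁻¹ / t)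
      (v * (qil q lam)⁻¹ * x) (v * (qil q lam)⁻¹ / x) (t * (q : ℂ) * (qil q lam)⁻¹ / v) := by
  funext z
  rw [fT, thetaQuotient, ← fTDen_eq_thetaQuotientDen, fTDen, div_div]

lemma piYt_coeff_eq {Q A t v z : ℂ} (hQ : Q ≠ 0) (hA : A ≠ 0) (ht : t ≠ 0) (hv : v ≠ 0)
    (hz : z ≠ 0) :
    t + t⁻¹ - v⁻¹ * z * Q⁻¹ * A⁻¹ - v * z⁻¹ * Q * A =
      t⁻¹ * ((1 - t * v * Q * A / z) * (1 - t * Q * A⁻¹ / v * (z / Q ^ 2))) := by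
  field_simp
  ring

/-- `f^ϑ_{x,t,v,λ,ε}` is an eigenfunction of `π_{λ,ε}(Ỹ_{t,v})` with eigenvalue `μ_x − μ_t`. -/
theorem stmt6 (q : ℝ) (hq0 : 0 < q) (hq1 : q < 1) (lam eps : ℝ) (x t v : ℂ)
    (hx : x ≠ 0) (ht : t ≠ 0) (hv : v ≠ 0) (z : ℂ) (hz : z ≠ 0)
    (hd1 : fTDen q lam x t v z ≠ 0) (hd2 : fTDen q lam x t v (z / (q : ℂ) ^ 2) ≠ 0) :
    piYt q lam eps t v (fT q lam eps x t v) z = (mu q x - mu q t) * fT q lam eps x t v z := by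
  have hQ : (q : ℂ) ≠ 0 := by exact_mod_cast hq0.ne'
  have hp : ‖(q : ℂ) ^ 2‖ < 1 := by
    rw [norm_pow, Complex.norm_real, Real.norm_eq_abs, abs_of_pos hq0]
    nlinarith
  have hA : qil q lam ≠ 0 := Complex.exp_ne_zero _
  have hE : qr q (-(2 * eps)) ≠ 0 := Complex.ofReal_ne_zero.mpr (Real.rpow_pos_of_pos hq0 _).ne'
  have hb : v * qr q (-(2 * eps)) * (qil q lam)⁻¹ / t ≠ 0 :=
    div_ne_zero (mul_ne_zero (mul_ne_zero hv hE) (inv_ne_zero hA)) ht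
  rw [fTDen_eq_thetaQuotientDen] at hd1 hd2
  have hshift := thetaQuotient_div_base (pow_ne_zero 2 hQ) hp hb hz hd1 hd2
    (a := t * v * (q : ℂ) * qil q lam)
    (C := qPoch (t * (q : ℂ) * ((qil q lam)⁻¹) ^ 2 * x) ((q : ℂ) ^ 2) *
      qPoch (t * (q : ℂ) * ((qil q lam)⁻¹) ^ 2 / x) ((q : ℂ) ^ 2))
  rw [← fT_eq_thetaQuotient] at hshift
  simp only [piYt, mu]
  rw [piYt_coeff_eq hQ hA ht hv hz]
  generalize fT q lam eps x t v (z / (q : ℂ) ^ 2) = F' at hshift ⊢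
  generalize fT q lam eps x t v z = F at hshift ⊢
  linear_combination (norm := skip) qr q (-(2 * eps)) * t⁻¹ / ((q : ℂ)⁻¹ - q) * hshift
  field_simp
  ring

end
end

section
/- Let λ, ε ∈ ℝ and let s, u, t, v ∈ ℂ be nonzero. Then for every function f : ℂ∖{0} → ℂ and every z ∈ ℂ∖{0}: (π_{λ,ε}(Ỹ_{t,v⁻¹})f)(z) = ((qu/v − v/(uq))/(q⁻²−q²))·(π_{λ,ε}(K⁻²)(π_{λ,ε}(Y_{s,u})f))(z) + ((vq/u − u/(vq))/(q⁻²−q²))·(π_{λ,ε}(Y_{s,u})(π_{λ,ε}(K⁻²)f))(z) + (((q⁻¹+q)(t+t⁻¹) − (v/u+u/v)(s+s⁻¹))/(q⁻²−q²))·((π_{λ,ε}(K⁻²)f)(z) − f(z)). (This is the identity Ỹ_{t,v⁻¹} = ((qu/v−v/uq)/(q⁻²−q²))K⁻²Y_{s,u} + ((vq/u−u/vq)/(q⁻²−q²))Y_{s,u}K⁻² + (((q⁻¹+q)(t+t⁻¹)−(v/u+u/v)(s+s⁻¹))/(q⁻²−q²))(K⁻²−1) realized in the representation π_{λ,ε}.)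 -/
noncomputable section

open Complex

/-- action of the twisted primitive element `Y_{s,u}` in the representation `π_{λ,ε}`. -/
def piY (q lam eps : ℝ) (s u : ℂ) (f : ℂ → ℂ) (z : ℂ) : ℂ :=
  qr q (2 * eps) *
      ((s + s⁻¹ - u * z * (q : ℂ) * qil q lam - u⁻¹ * z⁻¹ * (q : ℂ)⁻¹ * (qil q lam)⁻¹) /
        ((q : ℂ)⁻¹ - (q : ℂ))) * f ((q : ℂ) ^ 2 * z)
    + ((u * z * (qil q lam)⁻¹ + u⁻¹ * z⁻¹ * qil q lam - s - s⁻¹) / ((q : ℂ)⁻¹ - (q : ℂ))) * f z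
/-- action of `K⁻²` in the representation `π_{λ,ε}`. -/
def piKinv2 (q : ℝ) (eps : ℝ) (f : ℂ → ℂ) (z : ℂ) : ℂ := qr q (-(2 * eps)) * f (z / (q : ℂ) ^ 2)

/-! After composing with `K⁻²` the factors `q^{±2ε}` cancel, so all four operators in the
identity act as `f ↦ a(z) f(z/q²) + b(z) f(z)`. The identity therefore splits into two identities
between coefficient functions; these are Laurent polynomials in `z`, linear in `z`, `z⁻¹`,
`s + s⁻¹` and `t + t⁻¹`, and are checked by clearing the denominators in `q`, `u`, `v`. -/

lemma qr_neg {q : ℝ} (hq : 0 ≤ q) (a : ℝ) : qr q (-a) = (qr q a)⁻¹ := by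
  simp only [qr, Real.rpow_neg hq, Complex.ofReal_inv]

lemma qr_ne_zero {q : ℝ} (hq : 0 < q) (a : ℝ) : qr q a ≠ 0 :=
  Complex.ofReal_ne_zero.mpr (Real.rpow_pos_of_pos hq a).ne'

lemma one_sub_ofReal_pow_ne_zero {q : ℝ} (hq0 : 0 < q) (hq1 : q < 1) {n : ℕ} (hn : n ≠ 0) :
    1 - (q : ℂ) ^ n ≠ 0 := by
  have : q ^ n < 1 := pow_lt_one₀ hq0.le hq1 hn
  exact_mod_cast (sub_pos.mpr this).ne'

/- Coefficients of `f` at the shifted point (without the factor `q^{±2ε}`) and at `z` in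
`π_{λ,ε}(Y_{s,u}) f` and `π_{λ,ε}(Ỹ_{t,w}) f`. -/

def piYCoeffShift (q lam : ℝ) (s u z : ℂ) : ℂ :=
  (s + s⁻¹ - u * z * (q : ℂ) * qil q lam - u⁻¹ * z⁻¹ * (q : ℂ)⁻¹ * (qil q lam)⁻¹) /
    ((q : ℂ)⁻¹ - (q : ℂ))

def piYCoeffDiag (q lam : ℝ) (s u z : ℂ) : ℂ :=
  (u * z * (qil q lam)⁻¹ + u⁻¹ * z⁻¹ * qil q lam - s - s⁻¹) / ((q : ℂ)⁻¹ - (q : ℂ))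

def piYtCoeffShift (q lam : ℝ) (t w z : ℂ) : ℂ :=
  (t + t⁻¹ - w⁻¹ * z * (q : ℂ)⁻¹ * (qil q lam)⁻¹ - w * z⁻¹ * (q : ℂ) * qil q lam) /
    ((q : ℂ)⁻¹ - (q : ℂ))

def piYtCoeffDiag (q lam : ℝ) (t w z : ℂ) : ℂ :=
  (w⁻¹ * z * qil q lam + w * z⁻¹ * (qil q lam)⁻¹ - t - t⁻¹) / ((q : ℂ)⁻¹ - (q : ℂ))

section Composition

variable {q lam eps : ℝ} {f : ℂ → ℂ} {z : ℂ}

lemma piYt_eq {t w : ℂ} :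
    piYt q lam eps t w f z =
      qr q (-(2 * eps)) * piYtCoeffShift q lam t w z * f (z / (q : ℂ) ^ 2)
        + piYtCoeffDiag q lam t w z * f z := rfl

variable {s u : ℂ} (hq : 0 < q)
include hq

lemma piKinv2_piY :
    piKinv2 q eps (piY q lam eps s u f) z =
      piYCoeffShift q lam s u (z / (q : ℂ) ^ 2) * f z
        + qr q (-(2 * eps)) * piYCoeffDiag q lam s u (z / (q : ℂ) ^ 2) * f (z / (q : ℂ) ^ 2) := by
  have hq2 : (q : ℂ) ^ 2 ≠ 0 := pow_ne_zero 2 (Complex.ofReal_ne_zero.mpr hq.ne')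
  have hE := qr_ne_zero hq (2 * eps)
  rw [piKinv2, piY, mul_div_cancel₀ z hq2, qr_neg hq.le, ← piYCoeffShift, ← piYCoeffDiag]
  field_simp

lemma piY_piKinv2 :
    piY q lam eps s u (piKinv2 q eps f) z =
      piYCoeffShift q lam s u z * f z
        + qr q (-(2 * eps)) * piYCoeffDiag q lam s u z * f (z / (q : ℂ) ^ 2) := by
  have hq2 : (q : ℂ) ^ 2 ≠ 0 := pow_ne_zero 2 (Complex.ofReal_ne_zero.mpr hq.ne')
  have hE := qr_ne_zero hq (2 * eps)
  rw [piY, ← piYCoeffShift, ← piYCoeffDiag, piKinv2, piKinv2, mul_div_cancel_left₀ z hq2,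
    qr_neg hq.le]
  field_simp

end Composition

section Coefficients

variable {q lam : ℝ} {u v t z : ℂ} (hq0 : 0 < q) (hq1 : q < 1) (hu : u ≠ 0) (hv : v ≠ 0) (s : ℂ)
include hq0 hq1 hu hv

lemma piYtCoeffShift_inv :
    piYtCoeffShift q lam t v⁻¹ z =
      (((q : ℂ) * u / v - v / (u * (q : ℂ))) / (((q : ℂ) ^ 2)⁻¹ - (q : ℂ) ^ 2)) *
          piYCoeffDiag q lam s u (z / (q : ℂ) ^ 2)
        + ((v * (q : ℂ) / u - u / (v * (q : ℂ))) / (((q : ℂ) ^ 2)⁻¹ - (q : ℂ) ^ 2)) *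
          piYCoeffDiag q lam s u z
        + ((((q : ℂ)⁻¹ + (q : ℂ)) * (t + t⁻¹) - (v / u + u / v) * (s + s⁻¹)) /
            (((q : ℂ) ^ 2)⁻¹ - (q : ℂ) ^ 2)) := by
  have hq : (q : ℂ) ≠ 0 := Complex.ofReal_ne_zero.mpr hq0.ne'
  have h2 := one_sub_ofReal_pow_ne_zero hq0 hq1 two_ne_zero
  have h4 := one_sub_ofReal_pow_ne_zero hq0 hq1 four_ne_zero
  have hL : qil q lam ≠ 0 := Complex.exp_ne_zero _
  unfold piYtCoeffShift piYCoeffDiag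
  rw [inv_div, div_eq_mul_inv (_ ^ 2)]
  generalize z⁻¹ = w
  generalize s⁻¹ = s'
  generalize t⁻¹ = t'
  field_simp
  ring

lemma piYtCoeffDiag_inv :
    piYtCoeffDiag q lam t v⁻¹ z =
      (((q : ℂ) * u / v - v / (u * (q : ℂ))) / (((q : ℂ) ^ 2)⁻¹ - (q : ℂ) ^ 2)) *
          piYCoeffShift q lam s u (z / (q : ℂ) ^ 2)
        + ((v * (q : ℂ) / u - u / (v * (q : ℂ))) / (((q : ℂ) ^ 2)⁻¹ - (q : ℂ) ^ 2)) *
          piYCoeffShift q lam s u z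
        - ((((q : ℂ)⁻¹ + (q : ℂ)) * (t + t⁻¹) - (v / u + u / v) * (s + s⁻¹)) /
            (((q : ℂ) ^ 2)⁻¹ - (q : ℂ) ^ 2)) := by
  have hq : (q : ℂ) ≠ 0 := Complex.ofReal_ne_zero.mpr hq0.ne'
  have h2 := one_sub_ofReal_pow_ne_zero hq0 hq1 two_ne_zero
  have h4 := one_sub_ofReal_pow_ne_zero hq0 hq1 four_ne_zero
  have hL : qil q lam ≠ 0 := Complex.exp_ne_zero _
  unfold piYtCoeffDiag piYCoeffShift
  rw [inv_div, div_eq_mul_inv (_ ^ 2)]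
  generalize z⁻¹ = w
  generalize s⁻¹ = s'
  generalize t⁻¹ = t'
  field_simp
  ring

end Coefficients

theorem stmt7_general (q : ℝ) (hq0 : 0 < q) (hq1 : q < 1) (lam eps : ℝ) (s u t v : ℂ)
    (hu : u ≠ 0) (hv : v ≠ 0) (f : ℂ → ℂ) (z : ℂ) :
    piYt q lam eps t v⁻¹ f z
      = (((q : ℂ) * u / v - v / (u * (q : ℂ))) / (((q : ℂ) ^ 2)⁻¹ - (q : ℂ) ^ 2)) *
          piKinv2 q eps (piY q lam eps s u f) z
        + ((v * (q : ℂ) / u - u / (v * (q : ℂ))) / (((q : ℂ) ^ 2)⁻¹ - (q : ℂ) ^ 2)) *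
          piY q lam eps s u (piKinv2 q eps f) z
        + ((((q : ℂ)⁻¹ + (q : ℂ)) * (t + t⁻¹) - (v / u + u / v) * (s + s⁻¹)) /
            (((q : ℂ) ^ 2)⁻¹ - (q : ℂ) ^ 2)) * (piKinv2 q eps f z - f z) := by
  rw [piYt_eq, piYtCoeffShift_inv hq0 hq1 hu hv s, piYtCoeffDiag_inv hq0 hq1 hu hv s,
    piKinv2_piY hq0, piY_piKinv2 hq0, piKinv2]
  ring

/-- The identity
`Ỹ_{t,v⁻¹} = ((qu/v−v/uq)/(q⁻²−q²)) K⁻²Y_{s,u} + ((vq/u−u/vq)/(q⁻²−q²)) Y_{s,u}K⁻²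
 + (((q⁻¹+q)(t+t⁻¹)−(v/u+u/v)(s+s⁻¹))/(q⁻²−q²)) (K⁻²−1)`
realized in the representation `π_{λ,ε}`. -/
theorem stmt7 (q : ℝ) (hq0 : 0 < q) (hq1 : q < 1) (lam eps : ℝ) (s u t v : ℂ)
    (hs : s ≠ 0) (hu : u ≠ 0) (ht : t ≠ 0) (hv : v ≠ 0) (f : ℂ → ℂ) (z : ℂ) (hz : z ≠ 0) :
    piYt q lam eps t v⁻¹ f z
      = (((q : ℂ) * u / v - v / (u * (q : ℂ))) / (((q : ℂ) ^ 2)⁻¹ - (q : ℂ) ^ 2)) *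
          piKinv2 q eps (piY q lam eps s u f) z
        + ((v * (q : ℂ) / u - u / (v * (q : ℂ))) / (((q : ℂ) ^ 2)⁻¹ - (q : ℂ) ^ 2)) *
          piY q lam eps s u (piKinv2 q eps f) z
        + ((((q : ℂ)⁻¹ + (q : ℂ)) * (t + t⁻¹) - (v / u + u / v) * (s + s⁻¹)) /
            (((q : ℂ) ^ 2)⁻¹ - (q : ℂ) ^ 2)) * (piKinv2 q eps f z - f z) :=
  stmt7_general q hq0 hq1 lam eps s u t v hu hv f z

end
end
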